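/- arXiv:2403.14045 — 4 statements merged into one kernel-verified Lean document; each statement's English description precedes it below -/
import Mathlib

section
/- For every k ≥ 1, the silver stepsize schedule satisfies Σ_{i=0}^{2^k−2} π^(k)_i = ρ^k − 1 and Π_{i=0}^{2^k−2} (π^(k)_i − 1)² = ρ^(−2k). -/
open Finset

/-- The silver ratio ρ = 1 + √2. -/
noncomputable def rho : ℝ := 1 + Real.sqrt 2

/-- Entry `i` of the silver stepsize schedule π^(k) ∈ ℝ^(2^k − 1) (0-indexed):
π^(1) = [√2], π^(k+1) = [π^(k), β_k, π^(k)] where β_k = 1 + ρ^(k−1). -/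
noncomputable def piSilver : ℕ → ℕ → ℝ
  | 0, _ => 0
  | 1, _ => Real.sqrt 2
  | k + 2, i =>
      if i < 2 ^ (k + 1) - 1 then piSilver (k + 1) i
      else if i = 2 ^ (k + 1) - 1 then 1 + rho ^ k
      else piSilver (k + 1) (i - 2 ^ (k + 1))

/-- The sequence r_k: r_1 = 4, r_{k+1} = (r_k + 4ρ^k + √(r_k(r_k + 8ρ^k)))/2. -/
noncomputable def rseq : ℕ → ℝ
  | 0 => 0
  | 1 => 4
  | k + 2 =>
      (rseq (k + 1) + 4 * rho ^ (k + 1)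
        + Real.sqrt (rseq (k + 1) * (rseq (k + 1) + 8 * rho ^ (k + 1)))) / 2

/-- α_k = 1 + (√(r_k(r_k + 8ρ^k)) − r_k)/4. -/
noncomputable def alphaSeq (k : ℕ) : ℝ :=
  1 + (Real.sqrt (rseq k * (rseq k + 8 * rho ^ k)) - rseq k) / 4

/-- Entry `i` of h_right^(k) ∈ ℝ^(2^k − 1) (0-indexed):
h_right^(1) = [3/2], h_right^(k+1) = [π^(k), α_k, h_right^(k)]. -/
noncomputable def hright : ℕ → ℕ → ℝ
  | 0, _ => 0
  | 1, _ => 3 / 2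
  | k + 2, i =>
      if i < 2 ^ (k + 1) - 1 then piSilver (k + 1) i
      else if i = 2 ^ (k + 1) - 1 then alphaSeq (k + 1)
      else hright (k + 1) (i - 2 ^ (k + 1))

/-- h_left^(k) is h_right^(k) with its entries reversed. -/
noncomputable def hleft (k i : ℕ) : ℝ := hright k (2 ^ k - 2 - i)

/-! The recursion π^(k+2) = [π^(k+1), 1 + ρ^k, π^(k+1)] gives, for the sum S_k of the entries
and the product P_k of the entries minus one, S_(k+2) = 2 S_(k+1) + 1 + ρ^k and
P_(k+2) = P_(k+1)² ρ^k. Because ρ² = 2ρ + 1 these are solved by S_k = ρ^k − 1 and P_k = ρ^(−k),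
which also holds for π^(1) = [√2] since (√2 − 1)ρ = 1. -/

lemma rho_sq : rho ^ 2 = 2 * rho + 1 := by
  unfold rho
  linear_combination Real.sq_sqrt zero_le_two

lemma sqrt_two_sub_one_eq_rho_inv : Real.sqrt 2 - 1 = rho⁻¹ :=
  eq_inv_of_mul_eq_one_left <| by
    unfold rho
    linear_combination Real.sq_sqrt zero_le_two

lemma two_pow_succ_succ_sub_one (k : ℕ) :
    2 ^ (k + 2) - 1 = (2 ^ (k + 1) - 1) + 1 + (2 ^ (k + 1) - 1) := by
  have := Nat.one_le_two_pow (n := k + 1)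
  rw [pow_succ]
  omega

section piSilver

variable (k : ℕ)

lemma piSilver_succ_succ_of_lt {i : ℕ} (hi : i < 2 ^ (k + 1) - 1) :
    piSilver (k + 2) i = piSilver (k + 1) i := by
  rw [piSilver, if_pos hi]

lemma piSilver_succ_succ_two_pow_sub_one :
    piSilver (k + 2) (2 ^ (k + 1) - 1) = 1 + rho ^ k := by
  simp [piSilver]

lemma piSilver_succ_succ_two_pow_add (i : ℕ) :
    piSilver (k + 2) (2 ^ (k + 1) + i) = piSilver (k + 1) i := by
  have := Nat.one_le_two_pow (n := k + 1)
  rw [piSilver, if_neg (by omega), if_neg (by omega), Nat.add_sub_cancel_left]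

@[to_additive]
lemma prod_range_piSilver_succ_succ {M : Type*} [CommMonoid M] (g : ℝ → M) :
    ∏ i ∈ range (2 ^ (k + 2) - 1), g (piSilver (k + 2) i) =
      (∏ i ∈ range (2 ^ (k + 1) - 1), g (piSilver (k + 1) i)) ^ 2 * g (1 + rho ^ k) := by
  have hpos := Nat.one_le_two_pow (n := k + 1)
  rw [two_pow_succ_succ_sub_one, prod_range_add, prod_range_succ,
    piSilver_succ_succ_two_pow_sub_one]
  have hleft : ∏ i ∈ range (2 ^ (k + 1) - 1), g (piSilver (k + 2) i) =
      ∏ i ∈ range (2 ^ (k + 1) - 1), g (piSilver (k + 1) i) :=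
    prod_congr rfl fun i hi => by rw [piSilver_succ_succ_of_lt k (mem_range.1 hi)]
  have hright : ∏ i ∈ range (2 ^ (k + 1) - 1), g (piSilver (k + 2) (2 ^ (k + 1) - 1 + 1 + i)) =
      ∏ i ∈ range (2 ^ (k + 1) - 1), g (piSilver (k + 1) i) :=
    prod_congr rfl fun i _ => by rw [Nat.sub_add_cancel hpos, piSilver_succ_succ_two_pow_add]
  rw [hleft, hright, pow_two, mul_right_comm]

end piSilver

theorem sum_range_piSilver : ∀ k : ℕ, ∑ i ∈ range (2 ^ k - 1), piSilver k i = rho ^ k - 1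
  | 0 => by simp
  | 1 => by simp [piSilver, rho]
  | k + 2 => by
    have h := sum_range_piSilver_succ_succ k id
    simp only [id_eq, two_nsmul] at h
    rw [h, sum_range_piSilver (k + 1)]
    linear_combination -rho ^ k * rho_sq

theorem prod_range_piSilver_sub_one :
    ∀ k : ℕ, ∏ i ∈ range (2 ^ k - 1), (piSilver k i - 1) = (rho ^ k)⁻¹
  | 0 => by simp
  | 1 => by simp [piSilver, sqrt_two_sub_one_eq_rho_inv]
  | k + 2 => by
    rw [prod_range_piSilver_succ_succ (g := fun x => x - 1), prod_range_piSilver_sub_one (k + 1)]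
    have hρ : rho ≠ 0 := by unfold rho; positivity
    field_simp
    ring

theorem silver_sum_and_product_general (k : ℕ) :
    (∑ i ∈ Finset.range (2 ^ k - 1), piSilver k i = rho ^ k - 1) ∧
    (∏ i ∈ Finset.range (2 ^ k - 1), (piSilver k i - 1) ^ 2 = rho ^ (-(2 * (k : ℤ)))) := by
  refine ⟨sum_range_piSilver k, ?_⟩
  rw [prod_pow, prod_range_piSilver_sub_one, zpow_neg, mul_comm, zpow_mul, inv_pow]
  norm_cast

/-- **Lemma (silver identities).** For every `k ≥ 1`,
`Σ_{i=0}^{2^k−2} π^(k)_i = ρ^k − 1` and `Π_{i=0}^{2^k−2} (π^(k)_i − 1)² = ρ^(−2k)`. -/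
theorem silver_sum_and_product (k : ℕ) (hk : 1 ≤ k) :
    (∑ i ∈ Finset.range (2 ^ k - 1), piSilver k i = rho ^ k - 1) ∧
    (∏ i ∈ Finset.range (2 ^ k - 1), (piSilver k i - 1) ^ 2 = rho ^ (-(2 * (k : ℤ)))) :=
  silver_sum_and_product_general k
end

section
/- For every k ≥ 1, the stepsize schedule h_right^(k) satisfies 1 + 2·Σ_{i=0}^{2^k−2} (h_right^(k))_i = Π_{i=0}^{2^k−2} ((h_right^(k))_i − 1)^(−2), and this common value equals r_k. -/
open Finset

lemma sqrt2_sq : Real.sqrt 2 ^ 2 = 2 := Real.sq_sqrt (by norm_num)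

lemma rho_pos : 0 < rho := by
  unfold rho; positivity

lemma split_sum (n : ℕ) (f : ℕ → ℝ) :
    ∑ i ∈ range (2 * n + 1), f i
      = (∑ i ∈ range n, f i) + f n + ∑ i ∈ range n, f (n + 1 + i) := by
  rw [show 2 * n + 1 = (n + 1) + n by ring, Finset.sum_range_add, Finset.sum_range_succ]

lemma split_prod (n : ℕ) (f : ℕ → ℝ) :
    ∏ i ∈ range (2 * n + 1), f i
      = (∏ i ∈ range n, f i) * f n * ∏ i ∈ range n, f (n + 1 + i) := by
  rw [show 2 * n + 1 = (n + 1) + n by ring, Finset.prod_range_add, Finset.prod_range_succ]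


lemma pow_sub_eq (k : ℕ) : 2 ^ (k + 2) - 1 = 2 * (2 ^ (k + 1) - 1) + 1 := by
  have h : (2:ℕ) ^ (k + 2) = 2 * 2 ^ (k + 1) := by ring
  have h1 : 1 ≤ (2:ℕ) ^ (k + 1) := Nat.one_le_two_pow
  omega

lemma piSilver_left (k i : ℕ) (hi : i < 2 ^ (k + 1) - 1) :
    piSilver (k + 1 + 1) i = piSilver (k + 1) i := by
  simp [piSilver, hi]

lemma piSilver_mid (k : ℕ) : piSilver (k + 1 + 1) (2 ^ (k + 1) - 1) = 1 + rho ^ k := by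
  simp [piSilver]

lemma piSilver_right (k i : ℕ) :
    piSilver (k + 1 + 1) (2 ^ (k + 1) - 1 + 1 + i) = piSilver (k + 1) i := by
  have h1 : 1 ≤ (2:ℕ) ^ (k + 1) := Nat.one_le_two_pow
  have h2 : ¬ (2 ^ (k + 1) - 1 + 1 + i < 2 ^ (k + 1) - 1) := by omega
  have h3 : ¬ (2 ^ (k + 1) - 1 + 1 + i = 2 ^ (k + 1) - 1) := by omega
  have h4 : 2 ^ (k + 1) - 1 + 1 + i - 2 ^ (k + 1) = i := by omega
  simp [piSilver, h2, h3, h4]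

lemma piSilver_sum : ∀ k, 1 ≤ k →
    ∑ i ∈ range (2 ^ k - 1), piSilver k i = rho ^ k - 1 := by
  intro k hk
  induction k, hk using Nat.le_induction with
  | base => simp [piSilver, rho]
  | succ n hn ih =>
    obtain ⟨m, rfl⟩ : ∃ m, n = m + 1 := ⟨n - 1, by omega⟩
    rw [pow_sub_eq, split_sum]
    rw [Finset.sum_congr rfl (fun i hi => piSilver_left m i (mem_range.mp hi)),
        Finset.sum_congr rfl (fun i _ => piSilver_right m i), piSilver_mid, ih]
    have h := rho_sq
    have : rho ^ (m + 2) = 2 * rho ^ (m + 1) + rho ^ m := by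
      have : rho ^ (m + 2) = rho ^ m * rho ^ 2 := by ring
      rw [this, rho_sq]; ring
    linarith

lemma piSilver_prod : ∀ k, 1 ≤ k →
    ∏ i ∈ range (2 ^ k - 1), (piSilver k i - 1) = (rho ^ k)⁻¹ := by
  intro k hk
  induction k, hk using Nat.le_induction with
  | base =>
    simp only [pow_one, piSilver, rho]
    rw [Finset.prod_range_one]
    have h : (Real.sqrt 2 - 1) * (1 + Real.sqrt 2) = 1 := by nlinarith [sqrt2_sq]
    exact eq_inv_of_mul_eq_one_left h
  | succ n hn ih =>
    obtain ⟨m, rfl⟩ : ∃ m, n = m + 1 := ⟨n - 1, by omega⟩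
    rw [pow_sub_eq, split_prod]
    have e1 : ∀ i ∈ range (2 ^ (m + 1) - 1), piSilver (m + 1 + 1) i - 1 = piSilver (m + 1) i - 1 :=
      fun i hi => by rw [piSilver_left m i (mem_range.mp hi)]
    have e2 : ∀ i ∈ range (2 ^ (m + 1) - 1),
        piSilver (m + 1 + 1) (2 ^ (m + 1) - 1 + 1 + i) - 1 = piSilver (m + 1) i - 1 :=
      fun i _ => by rw [piSilver_right m i]
    rw [Finset.prod_congr rfl e1, Finset.prod_congr rfl e2, piSilver_mid, ih]
    have hr : (0:ℝ) < rho := rho_pos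
    field_simp
    ring


lemma rseq_pos : ∀ k, 1 ≤ k → 0 < rseq k := by
  intro k hk
  induction k, hk using Nat.le_induction with
  | base => norm_num [rseq]
  | succ n hn ih =>
    obtain ⟨m, rfl⟩ : ∃ m, n = m + 1 := ⟨n - 1, by omega⟩
    show 0 < (rseq (m + 1) + 4 * rho ^ (m + 1)
        + Real.sqrt (rseq (m + 1) * (rseq (m + 1) + 8 * rho ^ (m + 1)))) / 2
    have h1 : (0:ℝ) < rho ^ (m + 1) := pow_pos rho_pos _
    have h2 := Real.sqrt_nonneg (rseq (m + 1) * (rseq (m + 1) + 8 * rho ^ (m + 1)))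
    linarith

lemma hright_left (k i : ℕ) (hi : i < 2 ^ (k + 1) - 1) :
    hright (k + 1 + 1) i = piSilver (k + 1) i := by
  simp [hright, hi]

lemma hright_mid (k : ℕ) : hright (k + 1 + 1) (2 ^ (k + 1) - 1) = alphaSeq (k + 1) := by
  simp [hright]

lemma hright_right (k i : ℕ) :
    hright (k + 1 + 1) (2 ^ (k + 1) - 1 + 1 + i) = hright (k + 1) i := by
  have h1 : 1 ≤ (2:ℕ) ^ (k + 1) := Nat.one_le_two_pow
  have h2 : ¬ (2 ^ (k + 1) - 1 + 1 + i < 2 ^ (k + 1) - 1) := by omega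
  have h3 : ¬ (2 ^ (k + 1) - 1 + 1 + i = 2 ^ (k + 1) - 1) := by omega
  have h4 : 2 ^ (k + 1) - 1 + 1 + i - 2 ^ (k + 1) = i := by omega
  simp [hright, h2, h3, h4]

lemma hright_main : ∀ k, 1 ≤ k →
    (∑ i ∈ range (2 ^ k - 1), hright k i = (rseq k - 1) / 2) ∧
    (∏ i ∈ range (2 ^ k - 1), (hright k i - 1) ^ 2 = (rseq k)⁻¹) := by
  intro k hk
  induction k, hk using Nat.le_induction with
  | base =>
    constructor
    · norm_num [hright, rseq]
    · norm_num [hright, rseq]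
  | succ n hn ih =>
    obtain ⟨m, rfl⟩ : ∃ m, n = m + 1 := ⟨n - 1, by omega⟩
    obtain ⟨ihs, ihp⟩ := ih
    set r := rseq (m + 1) with hrdef
    have hr : 0 < r := rseq_pos (m + 1) hn
    set p := rho ^ (m + 1) with hpdef
    have hp : 0 < p := pow_pos rho_pos _
    set s := Real.sqrt (r * (r + 8 * p)) with hsdef
    have hs0 : 0 ≤ s := Real.sqrt_nonneg _
    have hs2 : s ^ 2 = r * (r + 8 * p) := Real.sq_sqrt (by positivity)
    have hrsucc : rseq (m + 1 + 1) = (r + 4 * p + s) / 2 := rfl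
    have halpha : alphaSeq (m + 1) = 1 + (s - r) / 4 := rfl
    -- sum part
    have hsum : ∑ i ∈ range (2 ^ (m + 1 + 1) - 1), hright (m + 1 + 1) i
        = (rseq (m + 1 + 1) - 1) / 2 := by
      rw [pow_sub_eq, split_sum]
      rw [Finset.sum_congr rfl (fun i hi => hright_left m i (mem_range.mp hi)),
          Finset.sum_congr rfl (fun i _ => hright_right m i), hright_mid,
          piSilver_sum (m + 1) hn, ihs, hrsucc, halpha]
      rw [← hpdef]
      ring
    refine ⟨hsum, ?_⟩
    -- product part
    have e1 : ∀ i ∈ range (2 ^ (m + 1) - 1),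
        (hright (m + 1 + 1) i - 1) ^ 2 = (piSilver (m + 1) i - 1) ^ 2 :=
      fun i hi => by rw [hright_left m i (mem_range.mp hi)]
    have e2 : ∀ i ∈ range (2 ^ (m + 1) - 1),
        (hright (m + 1 + 1) (2 ^ (m + 1) - 1 + 1 + i) - 1) ^ 2 = (hright (m + 1) i - 1) ^ 2 :=
      fun i _ => by rw [hright_right m i]
    have hpiprod : ∏ i ∈ range (2 ^ (m + 1) - 1), (piSilver (m + 1) i - 1) ^ 2
        = (p ^ 2)⁻¹ := by
      rw [Finset.prod_pow, piSilver_prod (m + 1) hn, ← hpdef, inv_pow]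
    rw [pow_sub_eq, split_prod, Finset.prod_congr rfl e1, Finset.prod_congr rfl e2,
        hright_mid, hpiprod, ihp, hrsucc, halpha]
    have hrnz : r ≠ 0 := ne_of_gt hr
    have hpnz : p ≠ 0 := ne_of_gt hp
    have hkey : (r + 4 * p + s) / 2 * ((s - r) / 4) ^ 2 = p ^ 2 * r := by
      linear_combination ((s + 4 * p - r) / 32) * hs2
    have hrs : (0:ℝ) < (r + 4 * p + s) / 2 := by linarith
    field_simp
    nlinarith [hkey, hrs]

/-- For every `k ≥ 1`, `1 + 2·Σ_i (h_right^(k))_i = Π_i ((h_right^(k))_i − 1)^(−2)`,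
and this common value equals `r_k`. -/
theorem hright_sum_product_balance (k : ℕ) (hk : 1 ≤ k) :
    (1 + 2 * ∑ i ∈ Finset.range (2 ^ k - 1), hright k i
      = ∏ i ∈ Finset.range (2 ^ k - 1), ((hright k i - 1) ^ 2)⁻¹) ∧
    (1 + 2 * ∑ i ∈ Finset.range (2 ^ k - 1), hright k i = rseq k) := by
  obtain ⟨hs, hp⟩ := hright_main k hk
  have h1 : 1 + 2 * ∑ i ∈ Finset.range (2 ^ k - 1), hright k i = rseq k := by
    rw [hs]; ring
  refine ⟨?_, h1⟩
  rw [h1, Finset.prod_inv_distrib, hp, inv_inv]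
end

section
/- For every k ≥ 1, r_k ≥ 4·ρ^(k−1). -/
open Finset

lemma rho_le_four : rho ≤ 4 := by
  unfold rho
  have h : Real.sqrt 2 ≤ 3 := by
    rw [show (3:ℝ) = Real.sqrt 9 by
      rw [show (9:ℝ) = 3^2 by norm_num, Real.sqrt_sq (by norm_num)]]
    exact Real.sqrt_le_sqrt (by norm_num)
  linarith

lemma rseq_lb_aux : ∀ k, 1 ≤ k → 4 * rho ^ (k - 1) ≤ rseq k := by
  intro k
  induction k with
  | zero => omega
  | succ n ih =>
    intro _
    cases n with
    | zero => simp [rseq]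
    | succ m =>
      have ih' : 4 * rho ^ m ≤ rseq (m + 1) := by simpa using ih (by omega)
      set r := rseq (m + 1) with hr
      set R := rho ^ (m + 1) with hR
      have hRpos : 0 < R := pow_pos rho_pos _
      have hrR : R ≤ r := by
        have : rho ^ (m + 1) ≤ 4 * rho ^ m := by
          rw [pow_succ]
          have := pow_pos rho_pos m
          nlinarith [rho_le_four]
        linarith
      have hrpos : 0 < r := lt_of_lt_of_le hRpos hrR
      have hsq : (4 * R - r) ^ 2 ≤ r * (r + 8 * R) := by nlinarith
      have hs : 4 * R - r ≤ Real.sqrt (r * (r + 8 * R)) := by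
        rcases le_or_gt (4 * R - r) 0 with h | h
        · exact h.trans (Real.sqrt_nonneg _)
        · exact (Real.le_sqrt h.le (by positivity)).mpr hsq
      show 4 * rho ^ (m + 2 - 1) ≤ rseq (m + 2)
      have : rseq (m + 2) = (r + 4 * R + Real.sqrt (r * (r + 8 * R))) / 2 := by
        simp [rseq, hr, hR]
      rw [this]
      have : 4 * rho ^ (m + 2 - 1) = 4 * R := by norm_num [hR]
      rw [this]
      linarith

/-- **Lemma.** For every `k ≥ 1`, `r_k ≥ 4ρ^(k−1)`. -/
theorem rseq_lower_bound (k : ℕ) (hk : 1 ≤ k) : 4 * rho ^ (k - 1) ≤ rseq k :=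
  rseq_lb_aux k hk
end

section
/- For every k ≥ 1, the sum of the entries of c_k equals √(r_k): Σ_{i=0}^{2^k−1} (c_k)_i = √(r_k). -/
open Finset

/-- Entry `i` of c_k ∈ ℝ^(2^k) (0-indexed): c_1 = (1,1),
c_{k+1} = [π^(k)/√r_{k+1}, β_{k+1}/√r_{k+1}, c_k] with β_{k+1} = 1 + ρ^k. -/
noncomputable def cvec : ℕ → ℕ → ℝ
  | 0, _ => 0
  | 1, _ => 1
  | k + 2, i =>
      if i < 2 ^ (k + 1) - 1 then piSilver (k + 1) i / Real.sqrt (rseq (k + 2))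
      else if i = 2 ^ (k + 1) - 1 then (1 + rho ^ (k + 1)) / Real.sqrt (rseq (k + 2))
      else cvec (k + 1) (i - 2 ^ (k + 1))

/-!
The entries of π^(k) sum to ρ^k − 1, since β_k + 2(ρ^k − 1) = ρ^(k+1) − 1 by
ρ² = 2ρ + 1. Hence the first 2^k entries of c_{k+1} sum to 2ρ^k / √r_{k+1}, and
by induction the claim reduces to √r_k · √r_{k+1} = r_{k+1} − 2ρ^k, which is the
quadratic equation that the recursion for r_{k+1} solves.
-/

lemma sum_range_add_concat {M : Type*} [AddCommMonoid M] (a b : ℕ → M) (x : M) {n : ℕ}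
    (hn : 0 < n) (m : ℕ) :
    ∑ i ∈ range (n + m), (if i < n - 1 then a i else if i = n - 1 then x else b (i - n)) =
      ∑ i ∈ range (n - 1), a i + x + ∑ i ∈ range m, b i := by
  obtain ⟨n, rfl⟩ := Nat.exists_eq_add_one_of_ne_zero hn.ne'
  rw [sum_range_add, sum_range_succ]
  simp only [Nat.add_sub_cancel, lt_irrefl, if_false, if_true]
  congr 2
  · exact sum_congr rfl fun i hi => if_pos (mem_range.mp hi)
  · funext i
    rw [if_neg (by omega), if_neg (by omega), Nat.add_sub_cancel_left]

lemma sum_piSilver (k : ℕ) :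
    ∑ i ∈ range (2 ^ (k + 1) - 1), piSilver (k + 1) i = rho ^ (k + 1) - 1 := by
  induction k with
  | zero => simp [piSilver, rho]
  | succ k ih =>
    have hlen : 2 ^ (k + 2) - 1 = 2 ^ (k + 1) + (2 ^ (k + 1) - 1) := by
      rw [pow_succ]; omega
    simp only [hlen, piSilver]
    rw [sum_range_add_concat _ _ _ (by positivity), ih]
    linear_combination -rho ^ k * rho_sq

lemma rseq_succ_pos (k : ℕ) : 0 < rseq (k + 1) := by
  induction k with
  | zero => norm_num [rseq]
  | succ k ih =>
    rw [rseq]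
    have := pow_pos rho_pos (k + 1)
    positivity

/-- With `R = (r + 4p + √(r(r + 8p)))/2` one has `rR = (R − 2p)²` and
`R − 2p = (r + √(r(r + 8p)))/2 ≥ 0`. -/
lemma sqrt_mul_sqrt_half_add_sqrt {r p : ℝ} (hr : 0 ≤ r) (hp : 0 ≤ p) :
    √r * √((r + 4 * p + √(r * (r + 8 * p))) / 2) =
      (r + 4 * p + √(r * (r + 8 * p))) / 2 - 2 * p := by
  set s := √(r * (r + 8 * p))
  have hs : s ^ 2 = r * (r + 8 * p) := Real.sq_sqrt (by positivity)
  rw [← Real.sqrt_mul hr, Real.sqrt_eq_iff_mul_self_eq (by positivity)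
    (by have := Real.sqrt_nonneg (r * (r + 8 * p)); linarith)]
  linear_combination -hs / 4

lemma sqrt_rseq_mul_sqrt_rseq_succ (k : ℕ) :
    √(rseq (k + 1)) * √(rseq (k + 2)) = rseq (k + 2) - 2 * rho ^ (k + 1) := by
  rw [rseq]
  exact sqrt_mul_sqrt_half_add_sqrt (rseq_succ_pos k).le (pow_pos rho_pos _).le

lemma sum_cvec_succ (k : ℕ) :
    ∑ i ∈ range (2 ^ (k + 1)), cvec (k + 1) i = √(rseq (k + 1)) := by
  induction k with
  | zero => norm_num [cvec, rseq, show (4 : ℝ) = 2 ^ 2 by norm_num]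
  | succ k ih =>
    have hR : 0 < √(rseq (k + 2)) := Real.sqrt_pos.mpr (rseq_succ_pos (k + 1))
    have hlen : 2 ^ (k + 2) = 2 ^ (k + 1) + 2 ^ (k + 1) := by rw [pow_succ]; omega
    simp only [hlen, cvec]
    rw [sum_range_add_concat _ _ _ (by positivity), ih, ← sum_div, sum_piSilver]
    field_simp
    linear_combination
      sqrt_rseq_mul_sqrt_rseq_succ k - Real.mul_self_sqrt (rseq_succ_pos (k + 1)).le

theorem cvec_sum_general (k : ℕ) :
    ∑ i ∈ Finset.range (2 ^ k), cvec k i = Real.sqrt (rseq k) := by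
  cases k with
  | zero => simp [cvec, rseq]
  | succ k => exact sum_cvec_succ k

/-- **Lemma.** For every `k ≥ 1`, `Σ_{i=0}^{2^k−1} (c_k)_i = √r_k`. -/
theorem cvec_sum (k : ℕ) (hk : 1 ≤ k) :
    ∑ i ∈ Finset.range (2 ^ k), cvec k i = Real.sqrt (rseq k) :=
  cvec_sum_general k
end
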